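/- arXiv:1505.06477 — 4 statements merged into one kernel-verified Lean document; each statement's English description precedes it below -/
import Mathlib

section
/- Let A₁,…,Aₙ be a toric system on a smooth projective surface X with χ(O_X)=1, and let A' = Aₖ + A_{k+1} + … + A_l for some 1 ≤ k ≤ l ≤ n-1. Then the sequence A₁,…,A_{k-1}, A', A_{l+1},…,Aₙ is again a toric system. -/
/-- A toric system on a surface (see the paper): `n ≥ 3`, cyclically adjacent
intersections `1`, other pairwise intersections `0`, sum linearly equivalent to `-K`. -/
def IsToricSystem {P : Type} [AddCommGroup P] (ι : P → P → ℤ) (K : P)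
    (L : List P) : Prop :=
  3 ≤ L.length ∧
  (∀ i, i + 1 < L.length → ι (L.getD i 0) (L.getD (i + 1) 0) = 1) ∧
  ι (L.getD (L.length - 1) 0) (L.getD 0 0) = 1 ∧
  (∀ i j, i + 1 < j → j < L.length → ¬(i = 0 ∧ j = L.length - 1) →
    ι (L.getD i 0) (L.getD j 0) = 0) ∧
  L.sum = -K

/-- if `A₁,…,Aₙ` is a toric system and `A' = Aₖ + … + A_l` for
`1 ≤ k ≤ l ≤ n-1` (1-based indices), then `A₁,…,A_{k-1}, A', A_{l+1},…,Aₙ` is again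
a toric system (assuming the new sequence still has length at least 3). -/
theorem stmt3 {P : Type} [AddCommGroup P]
    (ι : P → P → ℤ)
    (hbiadd : ∀ a b c : P, ι (a + b) c = ι a c + ι b c)
    (hsymm : ∀ a b : P, ι a b = ι b a)
    (K : P) (L : List P) (hTS : IsToricSystem ι K L)
    (k l : ℕ) (hk : 1 ≤ k) (hkl : k ≤ l) (hl : l ≤ L.length - 1)
    (L' : List P)
    (hL' : L' = L.take (k - 1) ++ [(((L.drop (k - 1)).take (l - k + 1)).sum)] ++ L.drop l)
    (hlen : 3 ≤ L'.length) :
    IsToricSystem ι K L' := by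
  obtain ⟨hn3, hadj, hwrap, hnon, hsum⟩ := hTS
  have hι0 : ∀ x : P, ι 0 x = 0 := by
    intro x
    have h := hbiadd 0 0 x
    rw [add_zero] at h
    omega
  -- generic getD helpers
  have hA : ∀ (A B : List P) (j : ℕ), j < A.length → (A ++ B).getD j 0 = A.getD j 0 := by
    intro A B j hj
    simp [List.getD_eq_getElem?_getD, List.getElem?_append, hj]
  have hB : ∀ (A B : List P) (j : ℕ), A.length ≤ j →
      (A ++ B).getD j 0 = B.getD (j - A.length) 0 := by
    intro A B j hj
    simp [List.getD_eq_getElem?_getD, List.getElem?_append_right hj]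
  have htakeD : ∀ (j c : ℕ), j < c → (L.take c).getD j 0 = L.getD j 0 := by
    intro j c hj
    simp [List.getD_eq_getElem?_getD, List.getElem?_take, hj]
  have hdropD : ∀ (j c : ℕ), (L.drop c).getD j 0 = L.getD (c + j) 0 := by
    intro j c
    simp [List.getD_eq_getElem?_getD, List.getElem?_drop]
  set n := L.length with hnL
  set m := k - 1 with hm
  set b := l - k + 1 with hb
  have hmb : m + b = l := by omega
  have hln : l ≤ n - 1 := hl
  have hn3' : 3 ≤ n := hn3
  have hbpos : 1 ≤ b := by omega
  set S := ((L.drop m).take b).sum with hS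
  -- generic block sum lemma
  have hblock : ∀ (x : P) (c q : ℕ), q + c ≤ n →
      ι ((L.drop q).take c).sum x = ∑ t ∈ Finset.range c, ι (L.getD (q + t) 0) x := by
    intro x c
    induction c with
    | zero => intro q _; simp [hι0]
    | succ c ih =>
      intro q h
      have hq : q < L.length := by omega
      have hdq : L.drop q = L.getD q 0 :: L.drop (q + 1) := by
        rw [List.getD_eq_getElem _ _ hq]
        exact List.drop_eq_getElem_cons hq
      have e1 : q + 0 = q := by omega
      rw [hdq, List.take_succ_cons, List.sum_cons, hbiadd, ih (q + 1) (by omega),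
        Finset.sum_range_succ', e1, add_comm]
      congr 1
      exact Finset.sum_congr rfl fun t _ => by rw [show q + 1 + t = q + (t + 1) from by omega]
  -- lengths
  have hTlen : (L.take m).length = m := by simp; omega
  have hTSlen : (L.take m ++ [S]).length = m + 1 := by simp; omega
  have hlen' : L'.length = m + 1 + (n - l) := by
    rw [hL']
    simp only [List.length_append, List.length_take, List.length_cons, List.length_nil,
      List.length_drop]
    omega
  have hlen3 : 3 ≤ m + 1 + (n - l) := by omega
  -- getD lemmas for L'
  have hget_lt : ∀ p, p < m → L'.getD p 0 = L.getD p 0 := by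
    intro p hp
    rw [hL', hA _ _ p (by omega), hA _ _ p (by omega), htakeD p m hp]
  have hget_eq : L'.getD m 0 = S := by
    rw [hL', show L.take m ++ [S] ++ L.drop l = L.take m ++ ([S] ++ L.drop l) from by
      simp [List.append_assoc], hB _ _ m (by omega), hTlen]
    simp
  have hget_gt : ∀ p, m < p → L'.getD p 0 = L.getD (p + (l - m - 1)) 0 := by
    intro p hp
    rw [hL', hB _ _ p (by omega), hTSlen, hdropD]
    congr 1
    omega
  refine ⟨hlen, ?_, ?_, ?_, ?_⟩
  · -- adjacency
    intro p hp
    rw [hlen'] at hp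
    rcases Nat.lt_trichotomy (p + 1) m with h1 | h1 | h1
    · rw [hget_lt p (by omega), hget_lt (p + 1) h1]
      exact hadj p (by omega)
    · -- p + 1 = m : ι A_{m-1} S = 1
      rw [hget_lt p (by omega), h1, hget_eq, hsymm, hS, hblock _ b m (by omega)]
      rw [Finset.sum_eq_single_of_mem 0 (Finset.mem_range.2 hbpos)]
      · rw [add_zero, hsymm]
        have := hadj p (by omega)
        rwa [show p + 1 = m from h1] at this
      · intro t ht hne
        have htb : t < b := Finset.mem_range.1 ht
        rw [hsymm]
        refine hnon p (m + t) (by omega) (by omega) (by omega)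
    · -- p ≥ m
      rcases Nat.lt_trichotomy p m with h2 | h2 | h2
      · omega
      · -- p = m : ι S A_l = 1
        rw [h2, hget_eq, hget_gt (m + 1) (by omega), hS, hblock _ b m (by omega)]
        have hix : m + 1 + (l - m - 1) = l := by omega
        rw [hix]
        rw [Finset.sum_eq_single_of_mem (b - 1) (Finset.mem_range.2 (by omega))]
        · have h3 := hadj (l - 1) (by omega)
          rw [show l - 1 + 1 = l from by omega] at h3
          rw [show m + (b - 1) = l - 1 from by omega]
          exact h3
        · intro t ht hne
          have htb : t < b := Finset.mem_range.1 ht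
          refine hnon (m + t) l (by omega) (by omega) ?_
          rintro ⟨h0, hl0⟩
          omega
      · -- p > m : both plain
        rw [hget_gt p h2, hget_gt (p + 1) (by omega)]
        rw [show p + 1 + (l - m - 1) = p + (l - m - 1) + 1 from by omega]
        exact hadj _ (by omega)
  · -- wraparound
    have hlast : L'.length - 1 = m + (n - l) := by omega
    have hgl : L'.getD (L'.length - 1) 0 = L.getD (n - 1) 0 := by
      rw [hlast, hget_gt (m + (n - l)) (by omega)]
      congr 1
      omega
    rw [hgl]
    rcases Nat.eq_zero_or_pos m with h0 | h0
    · -- first element is S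
      have hg0 : L'.getD 0 0 = S := h0 ▸ hget_eq
      rw [hg0, hsymm, hS, hblock _ b m (by omega)]
      rw [Finset.sum_eq_single_of_mem 0 (Finset.mem_range.2 hbpos)]
      · rw [add_zero, h0, hsymm]
        exact hwrap
      · intro t ht hne
        have htb : t < b := Finset.mem_range.1 ht
        refine hnon (m + t) (n - 1) (by omega) (by omega) (by omega)
    · rw [hget_lt 0 h0]
      exact hwrap
  · -- non-adjacency
    intro p q hpq hq hne
    rw [hlen'] at hq hne
    rcases Nat.lt_trichotomy q m with h1 | h1 | h1
    · rw [hget_lt p (by omega), hget_lt q h1]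
      exact hnon p q hpq (by omega) (by omega)
    · -- q = m
      rw [hget_lt p (by omega), h1, hget_eq, hsymm, hS, hblock _ b m (by omega)]
      apply Finset.sum_eq_zero
      intro t ht
      have htb : t < b := Finset.mem_range.1 ht
      rw [hsymm]
      exact hnon p (m + t) (by omega) (by omega) (by omega)
    · -- q > m
      rcases Nat.lt_trichotomy p m with h2 | h2 | h2
      · rw [hget_lt p h2, hget_gt q h1]
        refine hnon p (q + (l - m - 1)) (by omega) (by omega) ?_
        rintro ⟨h0, hq0⟩
        exact hne ⟨h0, by omega⟩
      · -- p = m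
        rw [h2, hget_eq, hget_gt q h1, hS, hblock _ b m (by omega)]
        apply Finset.sum_eq_zero
        intro t ht
        have htb : t < b := Finset.mem_range.1 ht
        refine hnon (m + t) (q + (l - m - 1)) (by omega) (by omega) ?_
        rintro ⟨h0, hq0⟩
        refine hne ⟨by omega, by omega⟩
      · rw [hget_gt p h2, hget_gt q h1]
        refine hnon (p + (l - m - 1)) (q + (l - m - 1)) (by omega) (by omega) (by omega)
  · -- sum
    have hsplit : L.take m ++ (((L.drop m).take b) ++ L.drop l) = L := by
      have h1 : (L.drop m).drop b = L.drop l := by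
        rw [List.drop_drop]
        congr 1
      rw [← h1, List.take_append_drop, List.take_append_drop]
    have hs2 : L'.sum = L.sum := by
      conv_rhs => rw [← hsplit]
      rw [hL']
      simp only [List.sum_append, List.sum_cons, List.sum_nil, hS]
      abel
    rw [hs2]
    exact hsum
end

section
/- Let A'₁,…,A'ₙ be a toric system on a smooth projective surface X', let p: X → X' be the blow-up of a point with exceptional divisor E, and set Aᵢ = p*A'ᵢ. Then for any 2 ≤ m ≤ n, the sequence A₁,…,A_{m-2}, A_{m-1}-E, E, A_m-E, A_{m+1},…,Aₙ is a toric system on X. -/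
structure IsBlowUp {P' P : Type} [AddCommGroup P'] [AddCommGroup P]
    (ι' : P' → P' → ℤ) (ι : P → P → ℤ) (p : P' →+ P) (E : P) : Prop where
  add_left : ∀ a b c : P, ι (a + b) c = ι a c + ι b c
  comm : ∀ a b : P, ι a b = ι b a
  exc_self : ι E E = -1
  pullback_exc : ∀ a : P', ι (p a) E = 0
  pullback_pullback : ∀ a b : P', ι (p a) (p b) = ι' a b

namespace IsBlowUp

variable {P' P : Type} [AddCommGroup P'] [AddCommGroup P] {ι' : P' → P' → ℤ} {ι : P → P → ℤ}
  {p : P' →+ P} {E : P}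

theorem sub_left (hX : IsBlowUp ι' ι p E) (a b c : P) : ι (a - b) c = ι a c - ι b c := by
  have := hX.add_left (a - b) b c
  rw [sub_add_cancel] at this
  omega

theorem sub_right (hX : IsBlowUp ι' ι p E) (a b c : P) : ι a (b - c) = ι a b - ι a c := by
  rw [hX.comm, hX.sub_left, hX.comm b, hX.comm c]

theorem exc_pullback (hX : IsBlowUp ι' ι p E) (a : P') : ι E (p a) = 0 := by
  rw [hX.comm, hX.pullback_exc]

theorem pullback_sub_exc_pullback (hX : IsBlowUp ι' ι p E) (a b : P') :
    ι (p a - E) (p b) = ι' a b := by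
  rw [hX.sub_left, hX.exc_pullback, hX.pullback_pullback, sub_zero]

theorem pullback_pullback_sub_exc (hX : IsBlowUp ι' ι p E) (a b : P') :
    ι (p a) (p b - E) = ι' a b := by
  rw [hX.sub_right, hX.pullback_exc, hX.pullback_pullback, sub_zero]

theorem pullback_sub_exc_exc (hX : IsBlowUp ι' ι p E) (a : P') : ι (p a - E) E = 1 := by
  rw [hX.sub_left, hX.pullback_exc, hX.exc_self]
  rfl

theorem exc_pullback_sub_exc (hX : IsBlowUp ι' ι p E) (a : P') : ι E (p a - E) = 1 := by
  rw [hX.comm, hX.pullback_sub_exc_exc]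

theorem pullback_sub_exc_pullback_sub_exc (hX : IsBlowUp ι' ι p E) (a b : P') :
    ι (p a - E) (p b - E) = ι' a b - 1 := by
  rw [hX.sub_right, hX.pullback_sub_exc_pullback, hX.pullback_sub_exc_exc]

end IsBlowUp

def IsCyclicChain {P : Type} (ι : P → P → ℤ) (f : ℕ → P) (n : ℕ) : Prop :=
  (∀ i, i + 1 < n → ι (f i) (f (i + 1)) = 1) ∧ ι (f (n - 1)) (f 0) = 1 ∧
  (∀ i j, i + 1 < j → j < n → ¬(i = 0 ∧ j = n - 1) → ι (f i) (f j) = 0)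

theorem isToricSystem_iff {P : Type} [AddCommGroup P] (ι : P → P → ℤ) (K : P) (L : List P) :
    IsToricSystem ι K L ↔
      3 ≤ L.length ∧ IsCyclicChain ι (L.getD · 0) L.length ∧ L.sum = -K := by
  simp only [IsToricSystem, IsCyclicChain, and_assoc]

structure IsBlowUpSeq {P' P : Type} [AddCommGroup P'] [AddCommGroup P]
    (p : P' →+ P) (E : P) (f : ℕ → P') (g : ℕ → P) (t : ℕ) : Prop where
  lt : ∀ k < t, g k = p (f k)
  left : g t = p (f t) - E
  exc : g (t + 1) = E
  right : g (t + 2) = p (f (t + 1)) - E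
  gt : ∀ k, t + 1 < k → g (k + 1) = p (f k)

namespace IsBlowUpSeq

variable {P' P : Type} [AddCommGroup P'] [AddCommGroup P] {ι' : P' → P' → ℤ} {ι : P → P → ℤ}
  {p : P' →+ P} {E : P} {f : ℕ → P'} {g : ℕ → P} {t n : ℕ}

theorem inter_succ (hX : IsBlowUp ι' ι p E) (hg : IsBlowUpSeq p E f g t)
    (hf : ∀ i, i + 1 < n → ι' (f i) (f (i + 1)) = 1) (ht : t + 2 ≤ n)
    (i : ℕ) (hi : i + 1 < n + 1) : ι (g i) (g (i + 1)) = 1 := by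
  obtain hi' | rfl | rfl | rfl | rfl | hi' :
      i + 1 < t ∨ i + 1 = t ∨ i = t ∨ i = t + 1 ∨ i = t + 2 ∨ t + 2 < i := by omega
  · rw [hg.lt i (by omega), hg.lt (i + 1) hi', hX.pullback_pullback]
    exact hf i (by omega)
  · rw [hg.lt i (by omega), hg.left, hX.pullback_pullback_sub_exc]
    exact hf i (by omega)
  · rw [hg.left, hg.exc, hX.pullback_sub_exc_exc]
  · rw [hg.exc, hg.right, hX.exc_pullback_sub_exc]
  · rw [hg.right, hg.gt (t + 2) (by omega), hX.pullback_sub_exc_pullback]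
    exact hf (t + 1) (by omega)
  · obtain ⟨k, rfl⟩ : ∃ k, i = k + 1 := ⟨i - 1, by omega⟩
    rw [hg.gt k (by omega), hg.gt (k + 1) (by omega), hX.pullback_pullback]
    exact hf k (by omega)

theorem inter_last_first (hX : IsBlowUp ι' ι p E) (hg : IsBlowUpSeq p E f g t)
    (hf : ι' (f (n - 1)) (f 0) = 1) (ht : t + 2 ≤ n) (hn : 3 ≤ n) :
    ι (g (n + 1 - 1)) (g 0) = 1 := by
  obtain ⟨k, rfl⟩ : ∃ k, n = k + 1 := ⟨n - 1, by omega⟩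
  simp only [Nat.add_sub_cancel] at hf ⊢
  rcases Nat.eq_zero_or_pos t with rfl | ht0
  · rw [hg.gt k (by omega), hg.left, hX.pullback_pullback_sub_exc]
    exact hf
  rw [hg.lt 0 ht0]
  obtain rfl | hk : k = t + 1 ∨ t + 1 < k := by omega
  · rw [hg.right, hX.pullback_sub_exc_pullback]
    exact hf
  · rw [hg.gt k hk, hX.pullback_pullback]
    exact hf

theorem inter_of_succ_lt (hX : IsBlowUp ι' ι p E) (hg : IsBlowUpSeq p E f g t)
    (hf_succ : ∀ i, i + 1 < n → ι' (f i) (f (i + 1)) = 1)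
    (hf : ∀ i j, i + 1 < j → j < n → ¬(i = 0 ∧ j = n - 1) → ι' (f i) (f j) = 0)
    (ht : t + 2 ≤ n) (i j : ℕ) (hij : i + 1 < j) (hj : j < n + 1)
    (hne : ¬(i = 0 ∧ j = n + 1 - 1)) : ι (g i) (g j) = 0 := by
  rcases lt_or_ge i t with hi | hi
  · rw [hg.lt i hi]
    obtain hj' | rfl | rfl | rfl | hj' :
        j < t ∨ j = t ∨ j = t + 1 ∨ j = t + 2 ∨ t + 2 < j := by omega
    · rw [hg.lt j hj', hX.pullback_pullback]
      exact hf i j hij (by omega) (by omega)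
    · rw [hg.left, hX.pullback_pullback_sub_exc]
      exact hf i j hij (by omega) (by omega)
    · rw [hg.exc, hX.pullback_exc]
    · rw [hg.right, hX.pullback_pullback_sub_exc]
      exact hf i (t + 1) (by omega) (by omega) (by omega)
    · obtain ⟨k, rfl⟩ : ∃ k, j = k + 1 := ⟨j - 1, by omega⟩
      rw [hg.gt k (by omega), hX.pullback_pullback]
      exact hf i k (by omega) (by omega) (by omega)
  obtain ⟨k, rfl⟩ : ∃ k, j = k + 1 := ⟨j - 1, by omega⟩
  obtain rfl | rfl | rfl | hi' : i = t ∨ i = t + 1 ∨ i = t + 2 ∨ t + 2 < i := by omega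
  · obtain rfl | hk : k = i + 1 ∨ i + 1 < k := by omega
    · rw [hg.left, hg.right, hX.pullback_sub_exc_pullback_sub_exc, hf_succ i (by omega), sub_self]
    · rw [hg.left, hg.gt k hk, hX.pullback_sub_exc_pullback]
      exact hf i k (by omega) (by omega) (by omega)
  · rw [hg.exc, hg.gt k (by omega), hX.exc_pullback]
  · rw [hg.right, hg.gt k (by omega), hX.pullback_sub_exc_pullback]
    exact hf (t + 1) k (by omega) (by omega) (by omega)
  · obtain ⟨l, rfl⟩ : ∃ l, i = l + 1 := ⟨i - 1, by omega⟩
    rw [hg.gt l (by omega), hg.gt k (by omega), hX.pullback_pullback]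
    exact hf l k (by omega) (by omega) (by omega)

theorem isCyclicChain (hX : IsBlowUp ι' ι p E) (hg : IsBlowUpSeq p E f g t)
    (hf : IsCyclicChain ι' f n) (ht : t + 2 ≤ n) (hn : 3 ≤ n) : IsCyclicChain ι g (n + 1) :=
  ⟨hg.inter_succ hX hf.1 ht, hg.inter_last_first hX hf.2.1 ht hn,
    hg.inter_of_succ_lt hX hf.1 hf.2.2 ht⟩

end IsBlowUpSeq

theorem List.eq_take_append_getD_append_drop {α : Type*} (L : List α) (d : α) {k : ℕ}
    (hk : k + 2 ≤ L.length) :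
    L = L.take k ++ [L.getD k d, L.getD (k + 1) d] ++ L.drop (k + 2) := by
  conv_lhs => rw [← L.take_append_drop k, List.drop_eq_getElem_cons (by omega),
    List.drop_eq_getElem_cons (by omega)]
  rw [List.getD_eq_getElem _ _ (by omega), List.getD_eq_getElem _ _ (by omega)]
  simp

theorem List.getD_map_addMonoidHom {M N : Type*} [AddZeroClass M] [AddZeroClass N]
    (f : M →+ N) (l : List M) (n : ℕ) : (l.map f).getD n 0 = f (l.getD n 0) := by
  simpa using l.getD_map 0 (n := n) f

section BlowUpList

variable {P' P : Type} [AddCommGroup P'] [AddCommGroup P] (p : P' →+ P) (E : P)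
  (T : List P') (a b : P') (D : List P')

def blowUpList : List P := T.map p ++ [p a - E, E, p b - E] ++ D.map p

theorem length_blowUpList :
    (blowUpList p E T a b D).length = (T ++ [a, b] ++ D).length + 1 := by
  simp only [blowUpList, List.length_append, List.length_map, List.length_cons, List.length_nil]
  omega

theorem sum_blowUpList : (blowUpList p E T a b D).sum = p (T ++ [a, b] ++ D).sum - E := by
  simp only [blowUpList, List.sum_append, List.sum_cons, List.sum_nil, add_zero, ← map_list_sum,
    map_add]
  abel

theorem isBlowUpSeq_blowUpList :
    IsBlowUpSeq p E ((T ++ [a, b] ++ D).getD · 0) ((blowUpList p E T a b D).getD · 0)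
      T.length where
  lt k hk := by
    rw [blowUpList, List.append_assoc, List.append_assoc,
      List.getD_append _ _ _ _ (by simpa using hk), List.getD_map_addMonoidHom,
      List.getD_append _ _ _ _ hk]
  left := by simp [blowUpList]
  exc := by simp [blowUpList]
  right := by simp [blowUpList]
  gt k hk := by
    rw [blowUpList, List.getD_append_right _ _ _ _ (by simp; omega),
      List.getD_map_addMonoidHom, List.getD_append_right _ _ _ _ (by simp; omega)]
    congr 2
    simp

end BlowUpList

theorem IsToricSystem.blowUpList {P' P : Type} [AddCommGroup P'] [AddCommGroup P]
    {ι' : P' → P' → ℤ} {ι : P → P → ℤ} {p : P' →+ P} {E : P} {K' : P'}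
    {T : List P'} {a b : P'} {D : List P'} (hX : IsBlowUp ι' ι p E)
    (h : IsToricSystem ι' K' (T ++ [a, b] ++ D)) :
    IsToricSystem ι (p K' + E) (blowUpList p E T a b D) := by
  obtain ⟨hn, hchain, hsum⟩ := (isToricSystem_iff ι' K' _).1 h
  refine (isToricSystem_iff ι _ _).2 ⟨?_, ?_, ?_⟩
  · rw [length_blowUpList]
    omega
  · rw [length_blowUpList]
    exact (isBlowUpSeq_blowUpList p E T a b D).isCyclicChain hX hchain (by simp) hn
  · rw [sum_blowUpList, hsum, map_neg]
    abel

/-- Let `A'₁,…,A'ₙ` be a toric system on a surface `X'`, let `p : X → X'`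
be the blow-up of a point with exceptional divisor `E` (`E² = -1`, `p*D·E = 0`,
`p*D₁·p*D₂ = D₁·D₂`, `K_X = p*K_{X'} + E`), and `Aᵢ = p*A'ᵢ`. Then for `2 ≤ m ≤ n`
(1-based), the augmentation `A₁,…,A_{m-2}, A_{m-1}-E, E, A_m-E, A_{m+1},…,Aₙ` is a
toric system on `X`. -/
theorem stmt5 {P' P : Type} [AddCommGroup P'] [AddCommGroup P]
    (ι' : P' → P' → ℤ) (ι : P → P → ℤ)
    (hbiadd : ∀ a b c : P, ι (a + b) c = ι a c + ι b c)
    (hsymm : ∀ a b : P, ι a b = ι b a)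
    (K' : P') (K : P) (p : P' →+ P) (E : P)
    (hE2 : ι E E = -1)
    (hpE : ∀ D' : P', ι (p D') E = 0)
    (hpp : ∀ a b : P', ι (p a) (p b) = ι' a b)
    (hK : K = p K' + E)
    (L' : List P') (hTS : IsToricSystem ι' K' L')
    (m : ℕ) (hm2 : 2 ≤ m) (hmn : m ≤ L'.length) :
    IsToricSystem ι K
      (((L'.take (m - 2)).map p) ++
        [p (L'.getD (m - 2) 0) - E, E, p (L'.getD (m - 1) 0) - E] ++
        ((L'.drop m).map p)) := by
  obtain ⟨k, rfl⟩ : ∃ k, m = k + 2 := ⟨m - 2, by omega⟩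
  rw [L'.eq_take_append_getD_append_drop 0 hmn] at hTS
  subst hK
  exact hTS.blowUpList ⟨hbiadd, hsymm, hE2, hpE, hpp⟩
end

section
/- On the Hirzebruch surface F_d with d even, the sequence S-(d/2)F, F+a(S-(d/2)F), S-(d/2)F, F-a(S-(d/2)F) is a toric system for any integer a. -/
/-- The intersection form on `Pic(F_d) = ℤF ⊕ ℤS` (a pair `(x, y)` stands for `xF + yS`):
`F² = 0`, `F·S = 1`, `S² = d`. -/
def hirzInter (d : ℤ) (a b : ℤ × ℤ) : ℤ := a.1 * b.2 + a.2 * b.1 + d * a.2 * b.2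

/-- The canonical class `K = (d-2)F - 2S` of the Hirzebruch surface `F_d`. -/
def hirzK (d : ℤ) : ℤ × ℤ := (d - 2, -2)

/-- on the Hirzebruch surface `F_d` with `d = 2e` even, the sequence
`S - (d/2)F, F + a(S - (d/2)F), S - (d/2)F, F - a(S - (d/2)F)` is a toric system
for any integer `a`.  (Here `S - (d/2)F = (-e, 1)`, `F + a(S - eF) = (1 - a*e, a)`,
`F - a(S - eF) = (1 + a*e, -a)` in the basis `F, S`.) -/
theorem stmt8 (d e : ℤ) (hd : 0 ≤ d) (he : d = 2 * e) (a : ℤ) :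
    IsToricSystem (hirzInter d) (hirzK d)
      [(-e, (1 : ℤ)), (1 - a * e, a), (-e, 1), (1 + a * e, -a)] := by
  subst he
  refine ⟨by simp, ?_, ?_, ?_, ?_⟩
  · intro i hi
    simp only [List.length_cons, List.length_nil] at hi
    have : i < 3 := by omega
    interval_cases i <;> simp [hirzInter] <;> ring
  · simp [hirzInter]; ring
  · intro i j hij hj hne
    simp only [List.length_cons, List.length_nil] at hj hne
    have : i < 3 := by omega
    interval_cases j <;> interval_cases i <;> simp_all [hirzInter] <;> ring
  · simp [hirzK, Prod.ext_iff]; ring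
end

section
/- Let D be a numerically left-orthogonal divisor on a del Pezzo surface X with D² = -1. Then D is linearly equivalent to an irreducible curve E with E ≅ ℙ¹, E² = -1; in particular H^i(X, O_X(-D)) = 0 for all i (D is left-orthogonal). -/
/-- Let `D` be a numerically left-orthogonal divisor (`χ(O_X(-D)) = 0`)
on a del Pezzo surface `X` with `D² = -1`. Then `D` is linearly equivalent to an
irreducible curve `E ≅ ℙ¹` with `E² = -1`; in particular `H^i(X, O_X(-D)) = 0` for
all `i`, i.e. `D` is left-orthogonal.

Encoding: `P` is the Picard group (so linear equivalence is equality), `ι` the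
intersection form, `K` the canonical class, `h D i = h^i(X, O_X(D))`, `χ` the Euler
characteristic, with Riemann–Roch (`χ(O_X) = 1`), Serre duality, ampleness of `-K`
(`K² ≥ 1`; a class meeting `-K` negatively has no sections; an effective class meeting
`-K` trivially is zero; an irreducible curve meets `-K` positively), decomposition of
effective classes into irreducible curves, the genus criterion for rationality
(`h¹(O_X) = 0` and `h²(-C) = 0` imply `C` rational, via `0 → O(-C) → O_X → O_C → 0`),
and left-orthogonality of smooth rational `(-1)`-curves. -/
theorem stmt11 {P : Type} [AddCommGroup P]
    (ι : P → P → ℤ)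
    (hbiadd : ∀ a b c : P, ι (a + b) c = ι a c + ι b c)
    (hsymm : ∀ a b : P, ι a b = ι b a)
    (K : P) (h : P → ℕ → ℕ) (χ : P → ℤ)
    (IrredCurve IsRationalCurve : P → Prop)
    (hχ : ∀ D : P, χ D = (h D 0 : ℤ) - h D 1 + h D 2)
    (hRR : ∀ D : P, 2 * χ D = 2 * 1 + ι D (D - K))
    (hSerre : ∀ D : P, ∀ i, i ≤ 2 → h D i = h (K - D) (2 - i))
    (hK2 : 1 ≤ ι K K)
    (hample : ∀ C : P, ι C (-K) < 0 → h C 0 = 0)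
    (hample0 : ∀ C : P, ι C (-K) = 0 → 1 ≤ h C 0 → C = 0)
    (hampleC : ∀ C : P, IrredCurve C → 1 ≤ ι C (-K))
    (hdecomp : ∀ D : P, 1 ≤ h D 0 →
      ∃ s : Multiset P, (∀ C ∈ s, IrredCurve C) ∧ D = s.sum)
    (hO1 : h 0 1 = 0)
    (hgenus : ∀ C : P, IrredCurve C → h 0 1 = 0 → h (-C) 2 = 0 → IsRationalCurve C)
    (hlo : ∀ C : P, IrredCurve C → IsRationalCurve C → ι C C = -1 →
      ∀ s, h (-C) s = 0)
    (D : P) (hD2 : ι D D = -1) (hnlo : χ (-D) = 0) :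
    (∃ E : P, D = E ∧ IrredCurve E ∧ IsRationalCurve E ∧ ι E E = -1) ∧
    ∀ s, h (-D) s = 0 := by

  -- bilinearity consequences
  have hz : ∀ a : P, ι 0 a = 0 := by
    intro a
    have h0 := hbiadd 0 0 a
    rw [add_zero] at h0
    omega
  have negl : ∀ a b : P, ι (-a) b = -ι a b := by
    intro a b
    have h0 := hbiadd a (-a) b
    rw [add_neg_cancel, hz] at h0
    omega
  have subl : ∀ a b c : P, ι (a - b) c = ι a c - ι b c := by
    intro a b c
    rw [sub_eq_add_neg, hbiadd, negl]
    ring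
  have negr : ∀ a b : P, ι a (-b) = -ι a b := by
    intro a b
    rw [hsymm, negl, hsymm]
  have subr : ∀ a b c : P, ι a (b - c) = ι a b - ι a c := by
    intro a b c
    rw [hsymm, subl, hsymm b a, hsymm c a]
  -- D·K = -1
  have hDK : ι D K = -1 := by
    have hr := hRR (-D)
    rw [hnlo] at hr
    have he : ι (-D) (-D - K) = ι D D + ι D K := by
      rw [negl, subr, negr]; ring
    omega
  -- h^2(D) = 0
  have hD2v : h D 2 = 0 := by
    rw [hSerre D 2 (le_refl 2)]
    apply hample
    have : ι (K - D) (-K) = -ι K K - 1 := by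
      rw [subl, negr, negr]; omega
    omega
  -- h^0(D) ≥ 1
  have hD0 : 1 ≤ h D 0 := by
    have hr := hRR D
    have he : ι D (D - K) = 0 := by rw [subr]; omega
    have hc := hχ D
    rw [hD2v] at hc
    omega
  -- sum of irreducible curves meets -K at least card
  have hcard : ∀ s : Multiset P, (∀ C ∈ s, IrredCurve C) →
      (Multiset.card s : ℤ) ≤ ι s.sum (-K) := by
    intro s
    induction s using Multiset.induction with
    | empty => intro _; simp [hz]
    | cons a t ih =>
      intro hall
      have h1 := hampleC a (hall a (Multiset.mem_cons_self a t))
      have h2 := ih (fun C hC => hall C (Multiset.mem_cons_of_mem hC))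
      rw [Multiset.sum_cons, hbiadd, Multiset.card_cons]
      push_cast
      linarith
  have hDnK : ι D (-K) = 1 := by rw [negr]; omega
  obtain ⟨s, hs, hsum⟩ := hdecomp D hD0
  have hle : (Multiset.card s : ℤ) ≤ 1 := by
    have := hcard s hs
    rw [← hsum, hDnK] at this
    exact this
  have hne : s ≠ 0 := by
    intro h0
    rw [h0, Multiset.sum_zero] at hsum
    rw [hsum, hz] at hDnK
    omega
  have hc1 : Multiset.card s = 1 := by
    have := Multiset.card_pos.mpr hne
    omega
  obtain ⟨C, hC⟩ := Multiset.card_eq_one.mp hc1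
  have hDC : D = C := by
    rw [hsum, hC, Multiset.sum_singleton]
  have hirr : IrredCurve D := by
    rw [hDC]
    exact hs C (by rw [hC]; exact Multiset.mem_singleton_self C)
  -- h^2(-D) = 0
  have hm2 : h (-D) 2 = 0 := by
    have hse := hSerre (-D) 2 (le_refl 2)
    rw [sub_neg_eq_add] at hse
    rw [hse]
    have hint : ι (K + D) (-K) = 1 - ι K K := by
      rw [hbiadd, negr, negr]; omega
    rcases lt_or_eq_of_le (show ι (K + D) (-K) ≤ 0 by omega) with hlt | heq
    · exact hample _ hlt
    · by_contra hne0
      have h1 : 1 ≤ h (K + D) 0 := Nat.one_le_iff_ne_zero.mpr hne0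
      have hz0 := hample0 _ heq h1
      have hDeq : D = -K := by
        rw [add_comm] at hz0
        exact eq_neg_of_add_eq_zero_left hz0
      rw [hDeq, negl, negr] at hD2
      omega
  have hrat : IsRationalCurve D := hgenus D hirr hO1 hm2
  exact ⟨⟨D, rfl, hirr, hrat, hD2⟩, hlo D hirr hrat hD2⟩
end
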